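/- arXiv:2602.14815 — 2 statements merged into one kernel-verified Lean document; each statement's English description precedes it below -/
import Mathlib

section
/- Let (E_1, E_2, E_3, S) be a 3D-2-Matching instance, i.e., every element belongs to exactly 2 triplets of S. If M ⊆ S is any inclusion-maximal set of pairwise element-disjoint triplets, then |S| ≤ 4·|M|. In particular, if M* is a maximum-cardinality set of pairwise element-disjoint triplets, then |S| ≤ 4·|M*|. -/
open Finset

variable {α β γ : Type*}

/-- A 3D-2-Matching instance: every element belongs to exactly 2 triplets of `S`. -/
def TwoRegular [DecidableEq α] [DecidableEq β] [DecidableEq γ]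
    (S : Finset (α × β × γ)) : Prop :=
  (∀ a : α, (S.filter fun s => s.1 = a).card = 2) ∧
  (∀ b : β, (S.filter fun s => s.2.1 = b).card = 2) ∧
  (∀ c : γ, (S.filter fun s => s.2.2 = c).card = 2)

/-- Two triplets are element-disjoint. -/
def TripleDisjoint (s t : α × β × γ) : Prop :=
  s.1 ≠ t.1 ∧ s.2.1 ≠ t.2.1 ∧ s.2.2 ≠ t.2.2

/-- A set of pairwise element-disjoint triplets of `S`. -/
def IsMatching (S M : Finset (α × β × γ)) : Prop :=
  M ⊆ S ∧ ∀ s ∈ M, ∀ t ∈ M, s ≠ t → TripleDisjoint s t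

instance TripleDisjoint.dec [DecidableEq α] [DecidableEq β] [DecidableEq γ]
    (s t : α × β × γ) : Decidable (TripleDisjoint s t) :=
  inferInstanceAs (Decidable (_ ∧ _ ∧ _))

lemma conflict_card [DecidableEq α] [DecidableEq β] [DecidableEq γ]
    {S : Finset (α × β × γ)} (hreg : TwoRegular S) {t : α × β × γ} (ht : t ∈ S) :
    (S.filter fun s => ¬ TripleDisjoint s t).card ≤ 4 := by
  obtain ⟨h1, h2, h3⟩ := hreg
  set A := S.filter fun s => s.1 = t.1 with hA
  set B := S.filter fun s => s.2.1 = t.2.1 with hB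
  set C := S.filter fun s => s.2.2 = t.2.2 with hC
  have htA : t ∈ A := by simp [hA, ht]
  have htB : t ∈ B := by simp [hB, ht]
  have htC : t ∈ C := by simp [hC, ht]
  have hsub : (S.filter fun s => ¬ TripleDisjoint s t) ⊆ A ∪ B.erase t ∪ C.erase t := by
    intro s hs
    simp only [mem_filter, TripleDisjoint, not_and_or, not_not] at hs
    obtain ⟨hsS, hc⟩ := hs
    by_cases hst : s = t
    · subst hst
      exact mem_union_left _ (mem_union_left _ htA)
    rcases hc with h | h | h
    · exact mem_union_left _ (mem_union_left _ (by simp [hA, hsS, h]))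
    · exact mem_union_left _ (mem_union_right _ (mem_erase.2 ⟨hst, by simp [hB, hsS, h]⟩))
    · exact mem_union_right _ (mem_erase.2 ⟨hst, by simp [hC, hsS, h]⟩)
  calc (S.filter fun s => ¬ TripleDisjoint s t).card
      ≤ (A ∪ B.erase t ∪ C.erase t).card := card_le_card hsub
    _ ≤ A.card + (B.erase t).card + (C.erase t).card := by
        exact le_trans (card_union_le _ _) (by gcongr; exact card_union_le _ _)
    _ ≤ 2 + 1 + 1 := by
        have : (B.erase t).card = 1 := by rw [card_erase_of_mem htB, hB, h2]
        have h' : (C.erase t).card = 1 := by rw [card_erase_of_mem htC, hC, h3]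
        rw [this, h', hA, h1]
    _ = 4 := rfl

/-- In a 3D-2-Matching instance, any inclusion-maximal set `M` of pairwise
element-disjoint triplets satisfies `|S| ≤ 4|M|`; in particular this holds for
any maximum-cardinality such set `M*`. -/
theorem card_le_four_mul_matching [DecidableEq α] [DecidableEq β] [DecidableEq γ]
    (S : Finset (α × β × γ)) (hreg : TwoRegular S) :
    (∀ M : Finset (α × β × γ), IsMatching S M →
      (∀ s ∈ S, s ∉ M → ∃ t ∈ M, ¬ TripleDisjoint s t) →
      S.card ≤ 4 * M.card) ∧
    (∀ Mstar : Finset (α × β × γ), IsMatching S Mstar →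
      (∀ M : Finset (α × β × γ), IsMatching S M → M.card ≤ Mstar.card) →
      S.card ≤ 4 * Mstar.card) := by
  have main : ∀ M : Finset (α × β × γ), IsMatching S M →
      (∀ s ∈ S, s ∉ M → ∃ t ∈ M, ¬ TripleDisjoint s t) →
      S.card ≤ 4 * M.card := by
    intro M hM hmax
    have hsub : S ⊆ M.biUnion fun t => S.filter fun s => ¬ TripleDisjoint s t := by
      intro s hs
      rcases em (s ∈ M) with hsM | hsM
      · exact mem_biUnion.2 ⟨s, hsM, mem_filter.2 ⟨hs, fun h => h.1 rfl⟩⟩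
      · obtain ⟨t, htM, h⟩ := hmax s hs hsM
        exact mem_biUnion.2 ⟨t, htM, mem_filter.2 ⟨hs, h⟩⟩
    calc S.card ≤ (M.biUnion fun t => S.filter fun s => ¬ TripleDisjoint s t).card :=
          card_le_card hsub
      _ ≤ ∑ t ∈ M, (S.filter fun s => ¬ TripleDisjoint s t).card := card_biUnion_le
      _ ≤ ∑ _t ∈ M, 4 := Finset.sum_le_sum fun t htM => conflict_card hreg (hM.1 htM)
      _ = 4 * M.card := by rw [Finset.sum_const, smul_eq_mul, mul_comm]
  refine ⟨main, fun Mstar hM hbest => main Mstar hM ?_⟩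
  intro s hs hsM
  by_contra h
  push_neg at h
  have hdisj : ∀ t ∈ Mstar, TripleDisjoint s t := h
  have hmatch : IsMatching S (insert s Mstar) := by
    constructor
    · intro x hx
      rcases mem_insert.1 hx with rfl | hx
      · exact hs
      · exact hM.1 hx
    · intro x hx y hy hxy
      rcases mem_insert.1 hx with hx | hx
      · rcases mem_insert.1 hy with hy | hy
        · exact absurd (hx.trans hy.symm) hxy
        · exact hx ▸ hdisj y hy
      · rcases mem_insert.1 hy with hy | hy
        · obtain ⟨a, b, c⟩ := hdisj x hx
          exact hy ▸ ⟨a.symm, b.symm, c.symm⟩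
        · exact hM.2 x hx y hy hxy
  have := hbest _ hmatch
  rw [card_insert_of_notMem hsM] at this
  omega
end

section
/- Let v_{ij} : [0,1] → ℝ be differentiable, concave, non-decreasing functions with v_{ij}(0) = 0 and v'_{ij}(1) > 0, let B_i > 0, and let ρ := max_{i,j} v'_{ij}(0)/v'_{ij}(1). Let (x, u, δ, α, p) satisfy the KKT conditions of the Eisenberg–Gale primal/dual pair (B_i/u_i = α_i with 0 < α_i ≤ 1; α_i·v'_{ij}(x_{ij}) ≤ p_j with equality whenever x_{ij} > 0; α_i·(u_i − Σ_j v_{ij}(x_{ij}) − δ_i) = 0; p_j·(1 − Σ_i x_{ij}) = 0; δ_i·(1 − α_i) = 0; with primal feasibility). Then for every allocation o* with o*_{ij} ≥ 0 and Σ_i o*_{ij} ≤ 1 for each good j, the Liquid Social Welfare satisfies LW(x) ≥ (1/(ρ+1))·LW(o*), where LW(z) := Σ_i min(Σ_j v_{ij}(z_{ij}), B_i). -/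
open Finset

/-- Tangent line of a concave differentiable function lies above the graph. -/
lemma eg_tangent_le {f g : ℝ → ℝ} (hc : ConcaveOn ℝ (Set.Icc 0 1) f)
    (hd : ∀ y ∈ Set.Icc (0 : ℝ) 1, HasDerivWithinAt f (g y) (Set.Icc 0 1) y)
    {a b : ℝ} (ha : a ∈ Set.Icc (0 : ℝ) 1) (hb : b ∈ Set.Icc (0 : ℝ) 1) :
    f b ≤ f a + g a * (b - a) := by
  rcases lt_trichotomy a b with h | h | h
  · have hs := hc.slope_le_of_hasDerivWithinAt ha hb h (hd a ha)
    rw [slope_def_field, div_le_iff₀ (sub_pos.2 h)] at hs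
    linarith
  · simp [h]
  · have hs := hc.le_slope_of_hasDerivWithinAt hb ha h (hd a ha)
    rw [slope_def_field, le_div_iff₀ (sub_pos.2 h)] at hs
    nlinarith
  
/-- The derivative of a concave function is antitone. -/
lemma eg_deriv_anti {f g : ℝ → ℝ} (hc : ConcaveOn ℝ (Set.Icc 0 1) f)
    (hd : ∀ y ∈ Set.Icc (0 : ℝ) 1, HasDerivWithinAt f (g y) (Set.Icc 0 1) y)
    {a b : ℝ} (ha : a ∈ Set.Icc (0 : ℝ) 1) (hb : b ∈ Set.Icc (0 : ℝ) 1)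
    (hab : a ≤ b) : g b ≤ g a := by
  rcases eq_or_lt_of_le hab with h | h
  · subst h; exact le_refl _
  · have h1 := eg_tangent_le hc hd ha hb
    have h2 := eg_tangent_le hc hd hb ha
    nlinarith

/-- The Liquid Social Welfare of an Eisenberg–Gale outcome for concave
valuations is at least a `1/(ρ+1)` fraction of the Liquid Social Welfare of any
allocation, where `ρ = max_{i,j} v'_{ij}(0) / v'_{ij}(1)`. -/
theorem eg_liquid_welfare {n m : ℕ}
    (v v' : Fin n → Fin m → ℝ → ℝ) (B : Fin n → ℝ)
    (hB : ∀ i, 0 < B i)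
    (hderiv : ∀ i j, ∀ y ∈ Set.Icc (0 : ℝ) 1,
      HasDerivWithinAt (v i j) (v' i j y) (Set.Icc 0 1) y)
    (hconc : ∀ i j, ConcaveOn ℝ (Set.Icc 0 1) (v i j))
    (hmono : ∀ i j, MonotoneOn (v i j) (Set.Icc 0 1))
    (hzero : ∀ i j, v i j 0 = 0)
    (hderivpos : ∀ i j, 0 < v' i j 1)
    (x : Fin n → Fin m → ℝ) (u δ α : Fin n → ℝ) (p : Fin m → ℝ)
    (hx : ∀ i j, 0 ≤ x i j) (hu : ∀ i, 0 < u i) (hδ : ∀ i, 0 ≤ δ i)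
    (hα : ∀ i, 0 < α i ∧ α i ≤ 1) (hp : ∀ j, 0 ≤ p j)
    (kkt1 : ∀ i, B i / u i = α i)
    (kkt2 : ∀ i j, α i * v' i j (x i j) ≤ p j)
    (kkt2' : ∀ i j, 0 < x i j → α i * v' i j (x i j) = p j)
    (kkt3 : ∀ i, α i * (u i - ∑ j, v i j (x i j) - δ i) = 0)
    (kkt4 : ∀ j, p j * (1 - ∑ i, x i j) = 0)
    (kkt5 : ∀ i, δ i * (1 - α i) = 0)
    (pfeas1 : ∀ i, u i ≤ ∑ j, v i j (x i j) + δ i)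
    (pfeas2 : ∀ j, ∑ i, x i j ≤ 1)
    (ρ : ℝ)
    (hρ : IsGreatest {r : ℝ | ∃ i j, r = v' i j 0 / v' i j 1} ρ)
    (ostar : Fin n → Fin m → ℝ)
    (hopos : ∀ i j, 0 ≤ ostar i j)
    (hosupply : ∀ j, ∑ i, ostar i j ≤ 1) :
    ∑ i, min (∑ j, v i j (x i j)) (B i) ≥
      (1 / (ρ + 1)) * ∑ i, min (∑ j, v i j (ostar i j)) (B i) := by
  have h0mem : (0 : ℝ) ∈ Set.Icc (0 : ℝ) 1 := ⟨le_rfl, zero_le_one⟩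
  have h1mem : (1 : ℝ) ∈ Set.Icc (0 : ℝ) 1 := ⟨zero_le_one, le_rfl⟩
  have hxmem : ∀ i j, x i j ∈ Set.Icc (0 : ℝ) 1 := fun i j =>
    ⟨hx i j, le_trans (Finset.single_le_sum (fun k _ => hx k j) (Finset.mem_univ i)) (pfeas2 j)⟩
  have homem : ∀ i j, ostar i j ∈ Set.Icc (0 : ℝ) 1 := fun i j =>
    ⟨hopos i j, le_trans (Finset.single_le_sum (fun k _ => hopos k j) (Finset.mem_univ i))
      (hosupply j)⟩
  have hvnn : ∀ i j, 0 ≤ v i j (x i j) := fun i j => by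
    have := hmono i j h0mem (hxmem i j) (hx i j)
    rwa [hzero i j] at this
  have hvonn : ∀ i j, 0 ≤ v i j (ostar i j) := fun i j => by
    have := hmono i j h0mem (homem i j) (hopos i j)
    rwa [hzero i j] at this
  set V : Fin n → ℝ := fun i => ∑ j, v i j (x i j) with hV
  set Vo : Fin n → ℝ := fun i => ∑ j, v i j (ostar i j) with hVo
  have hVnn : ∀ i, 0 ≤ V i := fun i => Finset.sum_nonneg fun j _ => hvnn i j
  have hVonn : ∀ i, 0 ≤ Vo i := fun i => Finset.sum_nonneg fun j _ => hvonn i j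
  have hBu : ∀ i, B i = α i * u i := fun i => by
    have h := kkt1 i; rw [div_eq_iff (hu i).ne'] at h; exact h
  have huV : ∀ i, u i = V i + δ i := fun i => by
    have h := kkt3 i
    rcases mul_eq_zero.1 h with h' | h'
    · exact absurd h' (hα i).1.ne'
    · linarith
  have hδα : ∀ i, δ i = δ i * α i := fun i => by
    have h := kkt5 i; rw [mul_sub, mul_one, sub_eq_zero] at h; exact h
  have hmin : ∀ i, min (V i) (B i) = B i - δ i := by
    intro i
    by_cases hd0 : δ i = 0
    · have hu' : u i = V i := by rw [huV i, hd0, add_zero]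
      have hBV : B i ≤ V i := by
        rw [hBu i, hu']
        calc α i * V i ≤ 1 * V i := mul_le_mul_of_nonneg_right (hα i).2 (hVnn i)
          _ = V i := one_mul _
      rw [min_eq_right hBV, hd0, sub_zero]
    · have hα1 : α i = 1 := by
        rcases mul_eq_zero.1 (kkt5 i) with h | h
        · exact absurd h hd0
        · linarith
      have hBV : B i = V i + δ i := by rw [hBu i, hα1, one_mul, huV i]
      have hVB : V i ≤ B i := by rw [hBV]; linarith [hδ i]
      rw [min_eq_left hVB, hBV]; ring
  -- derivative nonnegativity
  have hdnn : ∀ i j, ∀ y ∈ Set.Icc (0 : ℝ) 1, 0 ≤ v' i j y := fun i j y hy =>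
    le_trans (hderivpos i j).le (eg_deriv_anti (hconc i j) (hderiv i j) hy h1mem hy.2)
  -- price sum bound
  have hterm : ∀ i j, p j * x i j ≤ α i * v i j (x i j) := by
    intro i j
    rcases eq_or_lt_of_le (hx i j) with h | h
    · simp [← h, hzero i j]
    · rw [← kkt2' i j h]
      have ht := eg_tangent_le (hconc i j) (hderiv i j) (hxmem i j) h0mem
      rw [hzero i j] at ht
      have : v' i j (x i j) * x i j ≤ v i j (x i j) := by nlinarith
      nlinarith [(hα i).1.le]
  have hαV : ∀ i, α i * V i = B i - δ i := fun i => by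
    calc α i * V i = α i * u i - α i * δ i := by rw [huV i]; ring
      _ = B i - δ i := by rw [← hBu i, mul_comm (α i) (δ i), ← hδα i]
  have hpsum : ∑ j, p j ≤ ∑ i, (B i - δ i) := by
    have h1 : ∀ j, p j = ∑ i, p j * x i j := fun j => by
      have h := kkt4 j; rw [mul_sub, mul_one, sub_eq_zero] at h
      exact h.trans (Finset.mul_sum _ _ _)
    calc ∑ j, p j = ∑ j, ∑ i, p j * x i j := Finset.sum_congr rfl fun j _ => h1 j
      _ = ∑ i, ∑ j, p j * x i j := Finset.sum_comm
      _ ≤ ∑ i, ∑ j, α i * v i j (x i j) :=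
          Finset.sum_le_sum fun i _ => Finset.sum_le_sum fun j _ => hterm i j
      _ = ∑ i, α i * V i := Finset.sum_congr rfl fun i _ => (Finset.mul_sum _ _ _).symm
      _ = ∑ i, (B i - δ i) := Finset.sum_congr rfl fun i _ => hαV i
  -- per-buyer bound on the optimal allocation's value
  have hkey : ∀ i, min (Vo i) (B i) ≤ (B i - δ i) + ∑ j, p j * ostar i j := by
    intro i
    have hod : 0 ≤ ∑ j, p j * ostar i j :=
      Finset.sum_nonneg fun j _ => mul_nonneg (hp j) (hopos i j)
    by_cases hα1 : α i = 1
    · have hVB : V i = B i - δ i := by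
        have := hαV i; rwa [hα1, one_mul] at this
      have hVoV : Vo i ≤ V i + ∑ j, p j * ostar i j := by
        rw [hVo, hV, ← Finset.sum_add_distrib]
        refine Finset.sum_le_sum fun j _ => ?_
        have ht := eg_tangent_le (hconc i j) (hderiv i j) (hxmem i j) (homem i j)
        have hd1 : 0 ≤ v' i j (x i j) := hdnn i j _ (hxmem i j)
        have hd2 : v' i j (x i j) ≤ p j := by
          have := kkt2 i j; rwa [hα1, one_mul] at this
        have h3 : v' i j (x i j) * ostar i j ≤ p j * ostar i j :=
          mul_le_mul_of_nonneg_right hd2 (hopos i j)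
        nlinarith [mul_nonneg hd1 (hx i j)]
      calc min (Vo i) (B i) ≤ Vo i := min_le_left _ _
        _ ≤ V i + ∑ j, p j * ostar i j := hVoV
        _ = (B i - δ i) + ∑ j, p j * ostar i j := by rw [hVB]
    · have hd0 : δ i = 0 := by
        rcases mul_eq_zero.1 (kkt5 i) with h | h
        · exact h
        · exact absurd (by linarith : α i = 1) hα1
      calc min (Vo i) (B i) ≤ B i := min_le_right _ _
        _ = B i - δ i := by rw [hd0, sub_zero]
        _ ≤ (B i - δ i) + ∑ j, p j * ostar i j := le_add_of_nonneg_right hod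
  -- the global inequality LW(o*) ≤ 2 LW(x)
  have hsum2 : ∑ i, ∑ j, p j * ostar i j ≤ ∑ j, p j := by
    calc ∑ i, ∑ j, p j * ostar i j = ∑ j, ∑ i, p j * ostar i j := Finset.sum_comm
      _ = ∑ j, p j * ∑ i, ostar i j := Finset.sum_congr rfl fun j _ => (Finset.mul_sum _ _ _).symm
      _ ≤ ∑ j, p j * 1 := Finset.sum_le_sum fun j _ =>
          mul_le_mul_of_nonneg_left (hosupply j) (hp j)
      _ = ∑ j, p j := by simp
  have hLWx : ∑ i, min (V i) (B i) = ∑ i, (B i - δ i) :=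
    Finset.sum_congr rfl fun i _ => hmin i
  have hmain : ∑ i, min (Vo i) (B i) ≤ 2 * ∑ i, min (V i) (B i) := by
    calc ∑ i, min (Vo i) (B i)
        ≤ ∑ i, ((B i - δ i) + ∑ j, p j * ostar i j) := Finset.sum_le_sum fun i _ => hkey i
      _ = ∑ i, (B i - δ i) + ∑ i, ∑ j, p j * ostar i j := Finset.sum_add_distrib
      _ ≤ ∑ i, (B i - δ i) + ∑ j, p j := by linarith [hsum2]
      _ ≤ ∑ i, (B i - δ i) + ∑ i, (B i - δ i) := by linarith [hpsum]
      _ = 2 * ∑ i, min (V i) (B i) := by rw [hLWx]; ring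
  have hLWonn : 0 ≤ ∑ i, min (Vo i) (B i) :=
    Finset.sum_nonneg fun i _ => le_min (hVonn i) (hB i).le
  have hρ1 : 1 ≤ ρ := by
    obtain ⟨i, j, hij⟩ := hρ.1
    have hanti : v' i j 1 ≤ v' i j 0 :=
      eg_deriv_anti (hconc i j) (hderiv i j) h0mem h1mem zero_le_one
    rw [hij]
    exact (one_le_div (hderivpos i j)).2 hanti
  have hfrac : 1 / (ρ + 1) ≤ 1 / 2 :=
    one_div_le_one_div_of_le (by norm_num) (by linarith)
  have hineq : (1 / (ρ + 1)) * ∑ i, min (Vo i) (B i) ≤ (1 / 2) * ∑ i, min (Vo i) (B i) :=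
    mul_le_mul_of_nonneg_right hfrac hLWonn
  have : (1 / 2 : ℝ) * ∑ i, min (Vo i) (B i) ≤ ∑ i, min (V i) (B i) := by linarith
  calc (1 / (ρ + 1)) * ∑ i, min (∑ j, v i j (ostar i j)) (B i)
      = (1 / (ρ + 1)) * ∑ i, min (Vo i) (B i) := rfl
    _ ≤ ∑ i, min (V i) (B i) := by linarith
    _ = ∑ i, min (∑ j, v i j (x i j)) (B i) := rfl
end
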